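/- Let A = ℤ^m. The set SAT(A,1) of satisfiable one-variable equations over A has asymptotic density zero in the space of all one-variable equations A_X = ℤ × ℤ^m with respect to the sup-norm ball stratification; moreover ρ_r(SAT(A,1)) = O((ln r)/r) if m = 1 and ρ_r(SAT(A,1)) = O(1/r) if m ≥ 2. -/

import Mathlib

open Filter

/-- A one-variable equation `x^γ a^α = 1` over `ℤ^m`, given by `(γ, α)`,
is satisfiable iff `γ ≠ 0` and `γ ∣ gcd(α)`, or `γ = 0` and `α = 0`. -/
def SatOne (m : ℕ) (e : ℤ × (Fin m → ℤ)) : Prop :=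
  (e.1 ≠ 0 ∧ e.1 ∣ Finset.univ.gcd e.2) ∨ (e.1 = 0 ∧ ∀ j, e.2 j = 0)

/-- Ball density at radius `r` of a set of one-variable equations over `ℤ^m`. -/
noncomputable def rhoOne (m : ℕ) (S : Set (ℤ × (Fin m → ℤ))) (r : ℕ) : ℝ :=
  (Nat.card {e : ℤ × (Fin m → ℤ) //
      (|e.1| ≤ (r : ℤ) ∧ ∀ i, |e.2 i| ≤ (r : ℤ)) ∧ e ∈ S} : ℝ) /
    (2 * r + 1) ^ (m + 1)

/-!
If `(γ, α)` is satisfiable then `γ` divides every coordinate of `α`, so for each `1 ≤ g ≤ r` the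
ball `B_r` contains at most `2 (2 ⌊r/g⌋ + 1)^m ≤ 2 (3r/g)^m` satisfiable equations with `|γ| = g`.
Hence `|SAT ∩ B_r| ≤ 2 + 2 (3r)^m ∑_{g ≤ r} g^{-m}`, against `|B_r| ≥ (2r)^{m+1}`. The sum is at
most `1 + ln r` (harmonic numbers) when `m ≥ 1`, and at most `2` (Basel) when `m ≥ 2`.
-/

open Finset Asymptotics

noncomputable def eqnBall (m r : ℕ) : Finset (ℤ × (Fin m → ℤ)) :=
  Icc (-(r : ℤ)) r ×ˢ Fintype.piFinset fun _ => Icc (-(r : ℤ)) r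

lemma rhoOne_nonneg (m : ℕ) (p : ℤ × (Fin m → ℤ) → Prop) (r : ℕ) : 0 ≤ rhoOne m p r := by
  unfold rhoOne
  positivity

lemma rhoOne_eq_card (m : ℕ) (p : ℤ × (Fin m → ℤ) → Prop) [DecidablePred p] (r : ℕ) :
    rhoOne m p r = #{e ∈ eqnBall m r | p e} / (2 * r + 1) ^ (m + 1) := by
  rw [← Nat.card_eq_finsetCard]
  unfold rhoOne
  congr 2
  refine Nat.card_congr (Equiv.subtypeEquivRight fun e => ?_)
  simp only [eqnBall, mem_filter, mem_product, Fintype.mem_piFinset, mem_Icc, abs_le]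
  rfl

lemma SatOne.dvd {m : ℕ} {e : ℤ × (Fin m → ℤ)} (h : SatOne m e) (i : Fin m) : e.1 ∣ e.2 i := by
  rcases h with ⟨-, hdvd⟩ | ⟨-, hzero⟩
  · exact hdvd.trans (gcd_dvd (mem_univ i))
  · simp [hzero i]

lemma card_filter_dvd_Icc_le (d r : ℕ) :
    #{a ∈ Icc (-(r : ℤ)) r | (d : ℤ) ∣ a} ≤ 2 * (r / d) + 1 := by
  set q := r / d
  have hsub : {a ∈ Icc (-(r : ℤ)) r | (d : ℤ) ∣ a} ⊆ (Icc (-(q : ℤ)) q).image ((d : ℤ) * ·) := by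
    intro a ha
    obtain ⟨ha, k, rfl⟩ := mem_filter.mp ha
    rcases Nat.eq_zero_or_pos d with rfl | hd
    · exact mem_image.mpr ⟨0, by simp⟩
    have hk : k.natAbs ≤ q := by
      rw [Nat.le_div_iff_mul_le hd, mul_comm, ← Int.natAbs_natCast d, ← Int.natAbs_mul]
      rw [mem_Icc] at ha
      omega
    exact mem_image.mpr ⟨k, by rw [mem_Icc]; omega, rfl⟩
  calc _ ≤ #(Icc (-(q : ℤ)) q) := (card_le_card hsub).trans card_image_le
    _ = 2 * q + 1 := by rw [Int.card_Icc]; omega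

/-- The term `g = 0` equals `2` (as `r / 0 = 0`) and covers the zero equation. -/
lemma card_filter_satOne_le (m r : ℕ) [DecidablePred (SatOne m)] :
    #{e ∈ eqnBall m r | SatOne m e} ≤ ∑ g ∈ range (r + 1), 2 * (2 * (r / g) + 1) ^ m := by
  rw [card_eq_sum_card_fiberwise (f := fun e => e.1.natAbs) (t := range (r + 1))]
  · gcongr with g
    calc _ ≤ #(({(g : ℤ), -(g : ℤ)} : Finset ℤ) ×ˢ
          Fintype.piFinset fun _ : Fin m => {a ∈ Icc (-(r : ℤ)) r | (g : ℤ) ∣ a}) := by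
          refine card_le_card fun e he => ?_
          simp only [eqnBall, mem_filter, mem_product, Fintype.mem_piFinset] at he
          obtain ⟨⟨⟨-, hα⟩, hsat⟩, rfl⟩ := he
          simp only [mem_product, mem_insert, mem_singleton, Fintype.mem_piFinset, mem_filter,
            Int.natAbs_dvd]
          exact ⟨e.1.natAbs_eq, fun i => ⟨hα i, hsat.dvd i⟩⟩
      _ ≤ 2 * (2 * (r / g) + 1) ^ m := by
          rw [card_product, Fintype.card_piFinset, prod_const, card_univ, Fintype.card_fin]
          gcongr
          · exact card_le_two
          · exact card_filter_dvd_Icc_le g r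
  · intro e he
    simp only [eqnBall, coe_filter, mem_product, mem_Icc, Set.mem_ofPred_eq] at he
    simp only [coe_range, Set.mem_Iio]
    omega

lemma cast_two_mul_div_add_one_le {g r : ℕ} (hg : 1 ≤ g) (hgr : g ≤ r) :
    ((2 * (r / g) + 1 : ℕ) : ℝ) ≤ 3 * r / g := by
  have hg0 : (0 : ℝ) < g := by exact_mod_cast hg
  have hdiv : ((r / g : ℕ) : ℝ) ≤ r / g := Nat.cast_div_le
  have hone : (1 : ℝ) ≤ r / g := by rw [one_le_div hg0]; exact_mod_cast hgr
  push_cast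
  rw [mul_div_assoc]
  linarith

lemma card_filter_satOne_le_sum_inv_pow (m r : ℕ) [DecidablePred (SatOne m)] :
    (#{e ∈ eqnBall m r | SatOne m e} : ℝ) ≤
      2 + 2 * (3 * r) ^ m * ∑ g ∈ Icc 1 r, ((g : ℝ) ^ m)⁻¹ := by
  have h := card_filter_satOne_le m r
  rw [range_eq_Ico, sum_eq_sum_Ico_succ_bot (Nat.succ_pos r), zero_add,
    Nat.succ_eq_add_one, Ico_add_one_right_eq_Icc, Nat.div_zero] at h
  calc (#{e ∈ eqnBall m r | SatOne m e} : ℝ)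
      ≤ 2 + ∑ g ∈ Icc 1 r, 2 * ((2 * (r / g) + 1 : ℕ) : ℝ) ^ m := by
        simpa using (Nat.cast_le (α := ℝ)).mpr h
    _ ≤ 2 + ∑ g ∈ Icc 1 r, 2 * (3 * r / g : ℝ) ^ m := by
        gcongr with g hg
        exact cast_two_mul_div_add_one_le (mem_Icc.mp hg).1 (mem_Icc.mp hg).2
    _ = 2 + 2 * (3 * r) ^ m * ∑ g ∈ Icc 1 r, ((g : ℝ) ^ m)⁻¹ := by
        rw [mul_sum]
        congr 1
        refine sum_congr rfl fun g _ => ?_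
        rw [div_pow, div_eq_mul_inv]
        ring

lemma rhoOne_satOne_le {m r : ℕ} (hr : 1 ≤ r) {s : ℝ}
    (hs : ∑ g ∈ Icc 1 r, ((g : ℝ) ^ m)⁻¹ ≤ s) (hs1 : 1 ≤ s) :
    rhoOne m (SatOne m) r ≤ 2 * (3 / 2) ^ m * (s / r) := by
  classical
  have hr1 : (1 : ℝ) ≤ r := by exact_mod_cast hr
  have hcard : (#{e ∈ eqnBall m r | SatOne m e} : ℝ) ≤ 4 * (3 * r) ^ m * s := by
    have h1 : (1 : ℝ) ≤ (3 * r) ^ m := one_le_pow₀ (by linarith)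
    have h2 := card_filter_satOne_le_sum_inv_pow m r
    have h3 : 2 * (3 * r) ^ m * ∑ g ∈ Icc 1 r, ((g : ℝ) ^ m)⁻¹ ≤ 2 * (3 * r) ^ m * s := by
      gcongr
    nlinarith
  rw [rhoOne_eq_card, div_le_iff₀ (by positivity)]
  calc _ ≤ 4 * (3 * r) ^ m * s := hcard
    _ = 2 * (3 / 2) ^ m * (s / r) * (2 * r : ℝ) ^ (m + 1) := by
        rw [div_pow]
        field_simp
        ring
    _ ≤ _ := by gcongr; linarith

lemma sum_inv_pow_le_one_add_log {m : ℕ} (hm : 1 ≤ m) (r : ℕ) :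
    ∑ g ∈ Icc 1 r, ((g : ℝ) ^ m)⁻¹ ≤ 1 + Real.log r := by
  calc ∑ g ∈ Icc 1 r, ((g : ℝ) ^ m)⁻¹ ≤ ∑ g ∈ Icc 1 r, (g : ℝ)⁻¹ := by
        refine sum_le_sum fun g hg => ?_
        have hg1 : (1 : ℝ) ≤ g := by exact_mod_cast (mem_Icc.mp hg).1
        exact inv_anti₀ (by positivity) (le_self_pow₀ hg1 (by omega))
    _ = harmonic r := by simp [harmonic_eq_sum_Icc]
    _ ≤ 1 + Real.log r := harmonic_le_one_add_log r

lemma sum_inv_pow_le_two {m : ℕ} (hm : 2 ≤ m) (r : ℕ) :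
    ∑ g ∈ Icc 1 r, ((g : ℝ) ^ m)⁻¹ ≤ 2 := by
  calc ∑ g ∈ Icc 1 r, ((g : ℝ) ^ m)⁻¹ ≤ ∑ g ∈ Ioo 0 (r + 1), ((g : ℝ) ^ 2)⁻¹ := by
        rw [Ioo_add_one_right_eq_Ioc, ← Icc_add_one_left_eq_Ioc, zero_add]
        refine sum_le_sum fun g hg => ?_
        have hg1 : (1 : ℝ) ≤ g := by exact_mod_cast (mem_Icc.mp hg).1
        exact inv_anti₀ (by positivity) (pow_le_pow_right₀ hg1 hm)
    _ ≤ 2 / ((0 : ℕ) + 1) := sum_Ioo_inv_sq_le 0 (r + 1)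
    _ = 2 := by norm_num

lemma one_le_log_natCast {r : ℕ} (hr : 3 ≤ r) : 1 ≤ Real.log r := by
  rw [Real.le_log_iff_exp_le (by positivity)]
  have : (3 : ℝ) ≤ r := by exact_mod_cast hr
  linarith [Real.exp_one_lt_d9]

lemma rhoOne_satOne_isBigO_log_div {m : ℕ} (hm : 1 ≤ m) :
    (fun r : ℕ => rhoOne m (SatOne m) r) =O[atTop] (fun r : ℕ => Real.log r / r) := by
  refine .of_bound (2 * (3 / 2) ^ m * 2) ?_
  filter_upwards [eventually_ge_atTop 3] with r hr
  have hlog := one_le_log_natCast hr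
  rw [Real.norm_of_nonneg (rhoOne_nonneg _ _ r), Real.norm_of_nonneg (by positivity), mul_assoc,
    ← mul_div_assoc]
  exact rhoOne_satOne_le (by omega) (by linarith [sum_inv_pow_le_one_add_log hm r]) (by linarith)

lemma rhoOne_satOne_isBigO_inv {m : ℕ} (hm : 2 ≤ m) :
    (fun r : ℕ => rhoOne m (SatOne m) r) =O[atTop] (fun r : ℕ => 1 / (r : ℝ)) := by
  refine .of_bound (2 * (3 / 2) ^ m * 2) ?_
  filter_upwards [eventually_ge_atTop 1] with r hr
  rw [Real.norm_of_nonneg (rhoOne_nonneg _ _ r), Real.norm_of_nonneg (by positivity), mul_assoc,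
    mul_one_div]
  exact rhoOne_satOne_le hr (sum_inv_pow_le_two hm r) one_le_two

/-- `SAT(ℤ^m, 1)` is negligible; moreover its density is
`O(ln r / r)` for `m = 1` and `O(1/r)` for `m ≥ 2`. -/
theorem stmt8 (m : ℕ) (hm : 1 ≤ m) :
    Tendsto (rhoOne m (SatOne m)) atTop (nhds 0) ∧
      (m = 1 → (fun r : ℕ => rhoOne m (SatOne m) r) =O[atTop]
        (fun r : ℕ => Real.log r / r)) ∧
      (2 ≤ m → (fun r : ℕ => rhoOne m (SatOne m) r) =O[atTop]
        (fun r : ℕ => 1 / (r : ℝ))) := by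
  have hlog_div : Tendsto (fun r : ℕ => Real.log r / r) atTop (nhds 0) :=
    Real.isLittleO_log_id_atTop.tendsto_div_nhds_zero.comp tendsto_natCast_atTop_atTop
  exact ⟨(rhoOne_satOne_isBigO_log_div hm).trans_tendsto hlog_div,
    fun _ => rhoOne_satOne_isBigO_log_div hm, rhoOne_satOne_isBigO_inv⟩
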